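/- arXiv:1610.07531 — 5 statements merged into one kernel-verified Lean document; each statement's English description precedes it below -/
import Mathlib

section
/- If a sphere S^{n-1} ⊂ ℝ^n is sliced by k hyperplanes through the origin such that every subset of n of the hyperplanes has linearly independent normal vectors, then the hyperplanes divide the sphere into exactly r(n,k) = 2·∑_{i=0}^{n-1} C(k-1, i) connected regions. -/
/-!
Off the hyperplanes the sign vector `j ↦ sign ⟪a j, x⟫` is locally constant, and each of its
fibres on the sphere is the radial projection of an open convex cone (a chamber), hence connected;
so the regions correspond to the nonempty chambers. Removing the hyperplane `(a 0)ᗮ`, each chamber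
of the remaining arrangement either survives or is cut in two, and the cut ones are exactly the
chambers of the arrangement induced on `(a 0)ᗮ`, whose normals (projected onto it) are again in
general position, one dimension lower. Hence `r(n, k) = r(n, k - 1) + r(n - 1, k - 1)`, and
Pascal's rule gives the formula.
-/

open Finset Module Filter Topology Metric
open scoped RealInnerProductSpace

theorem natCard_connectedComponents_eq_natCard_range {X D : Type*} [TopologicalSpace X]
    [TopologicalSpace D] [DiscreteTopology D] {f : X → D} (hf : Continuous f)
    (hfib : ∀ d, IsPreconnected (f ⁻¹' {d})) :
    Nat.card (ConnectedComponents X) = Nat.card (Set.range f) := by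
  have hinj : Function.Injective hf.connectedComponentsLift := by
    intro u v huv
    obtain ⟨x, rfl⟩ := ConnectedComponents.surjective_coe u
    obtain ⟨y, rfl⟩ := ConnectedComponents.surjective_coe v
    rw [hf.connectedComponentsLift_apply_coe, hf.connectedComponentsLift_apply_coe] at huv
    exact ConnectedComponents.coe_eq_coe'.2
      ((hfib (f y)).subset_connectedComponent rfl huv)
  rw [← hf.connectedComponentsLift_comp_coe, ConnectedComponents.surjective_coe.range_comp,
    Nat.card_range_of_injective hinj]

theorem natCard_bool_prod_subtype {α : Type*} [Finite α] (P : Bool → α → Prop) :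
    Nat.card {p : Bool × α // P p.1 p.2} =
      Nat.card {x // ∃ b, P b x} + Nat.card {x // ∀ b, P b x} := by
  have hunion : {x | ∃ b, P b x} = {x | P false x} ∪ {x | P true x} :=
    Set.ext fun x => Bool.exists_bool
  have hinter : {x | ∀ b, P b x} = {x | P false x} ∩ {x | P true x} :=
    Set.ext fun x => Bool.forall_bool
  have := Set.ncard_union_add_ncard_inter {x | P false x} {x | P true x}
  rw [← hunion, ← hinter] at this
  rw [Nat.card_congr (Equiv.subtypeProdEquivSigmaSubtype P), Nat.card_sigma, Fintype.sum_bool,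
    add_comm]
  exact this.symm

section Sphere

variable {F : Type*} [NormedAddCommGroup F] [NormedSpace ℝ F] {C : Set F}

theorem inter_unitSphere_eq_image_normalize (h0 : (0 : F) ∉ C)
    (hC : ∀ x ∈ C, ∀ t : ℝ, 0 < t → t • x ∈ C) :
    C ∩ sphere 0 1 = (fun x => ‖x‖⁻¹ • x) '' C := by
  ext y
  constructor
  · rintro ⟨hy, hy1⟩
    exact ⟨y, hy, by simp [mem_sphere_zero_iff_norm.1 hy1]⟩
  · rintro ⟨x, hx, rfl⟩
    have hx0 : x ≠ 0 := ne_of_mem_of_not_mem hx h0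
    exact ⟨hC x hx _ (inv_pos.2 (norm_pos_iff.2 hx0)),
      mem_sphere_zero_iff_norm.2 (norm_smul_inv_norm hx0)⟩

theorem Convex.isPreconnected_inter_unitSphere (hconv : Convex ℝ C) (h0 : (0 : F) ∉ C)
    (hC : ∀ x ∈ C, ∀ t : ℝ, 0 < t → t • x ∈ C) : IsPreconnected (C ∩ sphere 0 1) := by
  rw [inter_unitSphere_eq_image_normalize h0 hC]
  refine hconv.isPreconnected.image _ (ContinuousOn.smul ?_ continuousOn_id)
  exact continuous_norm.continuousOn.inv₀ fun x hx =>
    norm_ne_zero_iff.2 (ne_of_mem_of_not_mem hx h0)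

end Sphere

section Chambers

variable {E : Type*} [NormedAddCommGroup E] [InnerProductSpace ℝ E] {ι : Type*}

noncomputable def boolSign (b : Bool) : ℝ := if b then 1 else -1

theorem boolSign_ne_zero (b : Bool) : boolSign b ≠ 0 := by
  cases b <;> norm_num [boolSign]

theorem boolSign_mul_pos_iff {b : Bool} {y : ℝ} :
    0 < boolSign b * y ↔ y ≠ 0 ∧ decide (0 < y) = b := by
  rcases lt_trichotomy y 0 with hy | rfl | hy
  · cases b <;> simp [boolSign, hy, hy.ne, hy.le]
  · simp
  · cases b <;> simp [boolSign, hy, hy.ne', hy.le]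

def chamber (a : ι → E) (σ : ι → Bool) : Set E := {x | ∀ j, 0 < boolSign (σ j) * ⟪a j, x⟫}

noncomputable def numChambers (a : ι → E) : ℕ :=
  Nat.card {σ : ι → Bool // (chamber a σ).Nonempty}

noncomputable def signVector (a : ι → E) (x : E) : ι → Bool := fun j => decide (0 < ⟪a j, x⟫)

theorem mem_chamber_iff {a : ι → E} {σ : ι → Bool} {x : E} :
    x ∈ chamber a σ ↔ (∀ j, ⟪a j, x⟫ ≠ 0) ∧ signVector a x = σ := by
  simp only [chamber, Set.mem_ofPred_eq, boolSign_mul_pos_iff, forall_and, funext_iff, signVector]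

theorem convex_chamber (a : ι → E) (σ : ι → Bool) : Convex ℝ (chamber a σ) := by
  refine convex_iff_forall_pos.2 fun x hx y hy s t hs ht _ j => ?_
  have key : boolSign (σ j) * ⟪a j, s • x + t • y⟫ =
      s * (boolSign (σ j) * ⟪a j, x⟫) + t * (boolSign (σ j) * ⟪a j, y⟫) := by
    rw [inner_add_right, real_inner_smul_right, real_inner_smul_right]; ring
  rw [key]
  have := hx j; have := hy j
  positivity

theorem isOpen_chamber [Finite ι] (a : ι → E) (σ : ι → Bool) : IsOpen (chamber a σ) := by
  simp only [chamber, Set.ofPred_forall]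
  exact isOpen_iInter_of_finite fun j => isOpen_lt continuous_const (by fun_prop)

theorem smul_mem_chamber {a : ι → E} {σ : ι → Bool} {x : E} (hx : x ∈ chamber a σ) {t : ℝ}
    (ht : 0 < t) : t • x ∈ chamber a σ := fun j => by
  rw [real_inner_smul_right, mul_left_comm]
  exact mul_pos ht (hx j)

theorem zero_notMem_chamber [Nonempty ι] (a : ι → E) (σ : ι → Bool) : (0 : E) ∉ chamber a σ :=
  fun h => by simpa using h (Classical.arbitrary ι)

theorem mem_chamber_cons {k : ℕ} {a : Fin (k + 1) → E} {b : Bool} {τ : Fin k → Bool} {x : E} :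
    x ∈ chamber a (Fin.cons b τ) ↔ 0 < boolSign b * ⟪a 0, x⟫ ∧ x ∈ chamber (Fin.tail a) τ := by
  simp only [chamber, Set.mem_ofPred_eq, Fin.forall_fin_succ, Fin.cons_zero, Fin.cons_succ,
    Fin.tail]

theorem chamber_orthogonalProjectionOnto (K : Submodule ℝ E) [K.HasOrthogonalProjection]
    (a : ι → E) (σ : ι → Bool) :
    chamber (fun j => K.orthogonalProjectionOnto (a j)) σ = (↑) ⁻¹' chamber a σ := by
  ext x
  simp [chamber]

theorem isPreconnected_chamber_inter_unitSphere [Nonempty ι] (a : ι → E) (σ : ι → Bool) :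
    IsPreconnected (chamber a σ ∩ sphere 0 1) :=
  (convex_chamber a σ).isPreconnected_inter_unitSphere (zero_notMem_chamber a σ)
    fun _ hx _ ht => smul_mem_chamber hx ht

theorem natCard_connectedComponents_eq_numChambers [Finite ι] [Nonempty ι] (a : ι → E) :
    Nat.card (ConnectedComponents {x : E | ‖x‖ = 1 ∧ ∀ j, ⟪a j, x⟫ ≠ 0}) = numChambers a := by
  set X := {x : E | ‖x‖ = 1 ∧ ∀ j, ⟪a j, x⟫ ≠ 0}
  have hX : ∀ σ, X ∩ chamber a σ = chamber a σ ∩ sphere 0 1 := fun σ => by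
    ext x
    simp only [X, Set.mem_inter_iff, Set.mem_ofPred_eq, mem_sphere_zero_iff_norm]
    exact ⟨fun h => ⟨h.2, h.1.1⟩, fun h => ⟨⟨h.2, (mem_chamber_iff.1 h.1).1⟩, h.1⟩⟩
  have hfib : ∀ σ, (fun x : X => signVector a x) ⁻¹' {σ} = (↑) ⁻¹' chamber a σ := fun σ => by
    ext x
    simp [mem_chamber_iff, x.2.2]
  have hcont : Continuous fun x : X => signVector a x :=
    continuous_discrete_rng.2 fun σ =>
      hfib σ ▸ (isOpen_chamber a σ).preimage continuous_subtype_val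
  rw [natCard_connectedComponents_eq_natCard_range hcont fun σ => by
    rw [hfib, ← Topology.IsInducing.subtypeVal.isPreconnected_image,
      Subtype.image_preimage_coe, hX]
    exact isPreconnected_chamber_inter_unitSphere a σ]
  have hrange : Set.range (fun x : X => signVector a x) = {σ | (chamber a σ).Nonempty} := by
    ext σ
    rw [← Set.preimage_singleton_nonempty, hfib, Subtype.preimage_coe_nonempty, hX,
      inter_unitSphere_eq_image_normalize (zero_notMem_chamber a σ)
        fun _ hx _ ht => smul_mem_chamber hx ht, Set.image_nonempty]
    rfl
  rw [hrange]
  rfl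

theorem IsOpen.exists_mem_inner_pos {C : Set E} (hC : IsOpen C) {x w : E} (hx : x ∈ C)
    (hxw : 0 ≤ ⟪w, x⟫) (hw : w ≠ 0) : ∃ y ∈ C, 0 < ⟪w, y⟫ := by
  have hnear : ∀ᶠ t in 𝓝 (0 : ℝ), x + t • w ∈ C :=
    (Continuous.tendsto (by fun_prop) 0).eventually (by simpa using hC.mem_nhds hx)
  obtain ⟨t, ht, htpos⟩ := ((hnear.filter_mono nhdsWithin_le_nhds).and
    (self_mem_nhdsWithin (s := Set.Ioi 0))).exists
  refine ⟨_, ht, ?_⟩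
  rw [inner_add_right, real_inner_smul_right, real_inner_self_eq_norm_sq]
  have : 0 < ‖w‖ := norm_pos_iff.2 hw
  have : (0 : ℝ) < t := htpos
  positivity

variable {k : ℕ} {a : Fin (k + 1) → E} {τ : Fin k → Bool}

theorem forall_chamber_cons_nonempty_iff (h0 : a 0 ≠ 0) :
    (∀ b, (chamber a (Fin.cons b τ)).Nonempty) ↔
      ∃ x ∈ (ℝ ∙ a 0)ᗮ, x ∈ chamber (Fin.tail a) τ := by
  simp only [Submodule.mem_orthogonal_singleton_iff_inner_right]
  constructor
  · intro h
    obtain ⟨x, hx⟩ := h true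
    obtain ⟨y, hy⟩ := h false
    rw [mem_chamber_cons] at hx hy
    simp only [boolSign, if_true, one_mul, Bool.false_eq_true, if_false, neg_one_mul,
      neg_pos] at hx hy
    obtain ⟨z, hz, hz0⟩ := (convex_chamber _ τ).isPreconnected.intermediate_value hy.2 hx.2
      (continuous_const.inner continuous_id).continuousOn ⟨hy.1.le, hx.1.le⟩
    exact ⟨z, hz0, hz⟩
  · rintro ⟨x, hx0, hx⟩ b
    obtain ⟨y, hy, hpos⟩ := (isOpen_chamber _ τ).exists_mem_inner_pos hx
      (w := boolSign b • a 0) (by simp [real_inner_smul_left, hx0])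
      (smul_ne_zero (boolSign_ne_zero b) h0)
    rw [real_inner_smul_left] at hpos
    exact ⟨y, mem_chamber_cons.2 ⟨hpos, hy⟩⟩

theorem exists_chamber_cons_nonempty_iff (h0 : a 0 ≠ 0) :
    (∃ b, (chamber a (Fin.cons b τ)).Nonempty) ↔ (chamber (Fin.tail a) τ).Nonempty := by
  constructor
  · rintro ⟨b, x, hx⟩
    exact ⟨x, (mem_chamber_cons.1 hx).2⟩
  · rintro ⟨x, hx⟩
    by_cases hx0 : ⟪a 0, x⟫ = 0
    · have hmem : x ∈ (ℝ ∙ a 0)ᗮ := Submodule.mem_orthogonal_singleton_iff_inner_right.2 hx0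
      exact ⟨true, (forall_chamber_cons_nonempty_iff h0).2 ⟨x, hmem, hx⟩ true⟩
    · exact ⟨_, x, mem_chamber_cons.2 ⟨boolSign_mul_pos_iff.2 ⟨hx0, rfl⟩, hx⟩⟩

theorem numChambers_eq_add (h0 : a 0 ≠ 0) :
    numChambers a = numChambers (Fin.tail a) +
      numChambers fun j => (ℝ ∙ a 0)ᗮ.orthogonalProjectionOnto (Fin.tail a j) := by
  have hsplit : numChambers a =
      Nat.card {p : Bool × (Fin k → Bool) // (chamber a (Fin.cons p.1 p.2)).Nonempty} :=
    Nat.card_congr ((Fin.consEquiv fun _ => Bool).subtypeEquiv fun _ => Iff.rfl).symm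
  rw [hsplit, natCard_bool_prod_subtype fun b τ => (chamber a (Fin.cons b τ)).Nonempty]
  congr 1
  · exact Nat.card_congr (Equiv.subtypeEquivRight fun τ => exists_chamber_cons_nonempty_iff h0)
  · refine Nat.card_congr (Equiv.subtypeEquivRight fun τ => ?_)
    rw [forall_chamber_cons_nonempty_iff h0, chamber_orthogonalProjectionOnto]
    simp [Set.Nonempty]

theorem numChambers_of_isEmpty [IsEmpty ι] (a : ι → E) : numChambers a = 1 :=
  Nat.card_eq_one_iff_unique.2
    ⟨inferInstance, ⟨⟨isEmptyElim, 0, fun j => isEmptyElim j⟩⟩⟩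

theorem numChambers_of_finrank_eq_zero [FiniteDimensional ℝ E] [Nonempty ι] (a : ι → E)
    (hE : finrank ℝ E = 0) : numChambers a = 0 := by
  have : Subsingleton E := finrank_zero_iff.1 hE
  have : IsEmpty {σ : ι → Bool // (chamber a σ).Nonempty} :=
    ⟨fun ⟨σ, x, hx⟩ => zero_notMem_chamber a σ (Subsingleton.elim x 0 ▸ hx)⟩
  exact Nat.card_of_isEmpty

def GeneralPosition (n : ℕ) (a : ι → E) : Prop :=
  ∀ s : Finset ι, s.card ≤ n → LinearIndepOn ℝ a s

theorem GeneralPosition.ne_zero {n : ℕ} {a : ι → E} (ha : GeneralPosition n a) (hn : n ≠ 0)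
    (j : ι) : a j ≠ 0 :=
  (linearIndepOn_singleton_iff ℝ).1 (by simpa using ha {j} (by simpa [Nat.one_le_iff_ne_zero]))

theorem GeneralPosition.comp {n : ℕ} {a : ι → E} (ha : GeneralPosition n a) {ι' : Type*}
    {f : ι' → ι} (hf : Function.Injective f) : GeneralPosition n (a ∘ f) := fun s hs => by
  have := ha (s.map ⟨f, hf⟩) (by simpa using hs)
  rw [Finset.coe_map] at this
  exact this.comp_of_image hf.injOn

theorem LinearIndepOn.orthogonalProjectionOnto_orthogonal_span_singleton {v : ι → E}
    {s : Set ι} (hv : LinearIndepOn ℝ v s) {w : E} (hw : w ∉ Submodule.span ℝ (v '' s)) :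
    LinearIndepOn ℝ (fun i => (ℝ ∙ w)ᗮ.orthogonalProjectionOnto (v i)) s := by
  have hw0 : w ≠ 0 := fun h => hw (h ▸ Submodule.zero_mem _)
  have hdisj : Disjoint (Submodule.span ℝ (v '' s))
      ((ℝ ∙ w)ᗮ.orthogonalProjectionOnto : E →ₗ[ℝ] (ℝ ∙ w)ᗮ).ker := by
    rw [Submodule.ker_orthogonalProjectionOnto, Submodule.orthogonal_orthogonal]
    exact (Submodule.disjoint_span_singleton' hw0).2 hw
  exact hv.map_injOn _ (LinearMap.injOn_of_disjoint_ker le_rfl hdisj)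

theorem GeneralPosition.orthogonalProjectionOnto_tail {m k : ℕ} {a : Fin (k + 1) → E}
    (ha : GeneralPosition (m + 1) a) :
    GeneralPosition m fun j => (ℝ ∙ a 0)ᗮ.orthogonalProjectionOnto (Fin.tail a j) := by
  intro s hs
  have hins := ha (insert 0 (s.map (Fin.succEmb k)))
    ((card_insert_le _ _).trans (by simpa using hs))
  rw [Finset.coe_insert, Finset.coe_map, linearIndepOn_insert (by simp [Fin.succ_ne_zero])]
    at hins
  obtain ⟨hind, hspan⟩ := hins
  rw [← Set.image_comp] at hspan
  have htail : LinearIndepOn ℝ (Fin.tail a) s := hind.comp_of_image (Fin.succ_injective _).injOn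
  exact htail.orthogonalProjectionOnto_orthogonal_span_singleton hspan

end Chambers

theorem sum_range_succ_choose_succ (k m : ℕ) :
    ∑ i ∈ range (m + 1), (k + 1).choose i =
      ∑ i ∈ range (m + 1), k.choose i + ∑ i ∈ range m, k.choose i := by
  rw [sum_range_succ' (fun i => (k + 1).choose i), sum_range_succ' (fun i => k.choose i)]
  simp only [Nat.choose_succ_succ, sum_add_distrib, Nat.choose_zero_right]
  ring

theorem numChambers_eq_of_generalPosition {E : Type*} [NormedAddCommGroup E]
    [InnerProductSpace ℝ E] [FiniteDimensional ℝ E] {k : ℕ} {a : Fin (k + 1) → E}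
    (ha : GeneralPosition (finrank ℝ E) a) :
    numChambers a = 2 * ∑ i ∈ range (finrank ℝ E), k.choose i := by
  induction k generalizing E with
  | zero =>
    rcases eq_or_ne (finrank ℝ E) 0 with hE | hE
    · simp [numChambers_of_finrank_eq_zero a hE, hE]
    rw [numChambers_eq_add (ha.ne_zero hE 0), numChambers_of_isEmpty, numChambers_of_isEmpty]
    obtain ⟨m, hm⟩ := Nat.exists_eq_add_one_of_ne_zero hE
    simp [hm, sum_range_succ']
  | succ k ih =>
    rcases eq_or_ne (finrank ℝ E) 0 with hE | hE
    · simp [numChambers_of_finrank_eq_zero a hE, hE]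
    obtain ⟨m, hm⟩ := Nat.exists_eq_add_one_of_ne_zero hE
    have : Fact (finrank ℝ E = m + 1) := ⟨hm⟩
    have h0 : a 0 ≠ 0 := ha.ne_zero hE 0
    have hH : finrank ℝ (ℝ ∙ a 0)ᗮ = m := Submodule.finrank_orthogonal_span_singleton h0
    rw [numChambers_eq_add h0, ih (a := Fin.tail a) (ha.comp (Fin.succ_injective _)),
      ih (hH ▸ (hm ▸ ha).orthogonalProjectionOnto_tail), hH, hm, sum_range_succ_choose_succ]
    ring

theorem sphere_slicing_count_general (n k : ℕ) (hk : 1 ≤ k)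
    (a : Fin k → EuclideanSpace ℝ (Fin n))
    (hindep : ∀ s : Finset (Fin k), s.card ≤ n →
      LinearIndependent ℝ (fun i : s => a i)) :
    Nat.card (ConnectedComponents
      {x : EuclideanSpace ℝ (Fin n) | ‖x‖ = 1 ∧ ∀ j, inner ℝ (a j) x ≠ (0 : ℝ)}) =
      2 * ∑ i ∈ Finset.range n, (k - 1).choose i := by
  obtain ⟨k, rfl⟩ := Nat.exists_eq_add_of_le' hk
  rw [natCard_connectedComponents_eq_numChambers, Nat.add_sub_cancel]
  have ha : GeneralPosition (finrank ℝ (EuclideanSpace ℝ (Fin n))) a := by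
    rwa [finrank_euclideanSpace_fin]
  simpa [finrank_euclideanSpace_fin] using numChambers_eq_of_generalPosition ha

/-- Schläfli's lemma: `k` hyperplanes through the origin in general position divide
the unit sphere `S^{n-1} ⊂ ℝ^n` into `2 * ∑_{i=0}^{n-1} C(k-1, i)` connected regions. -/
theorem sphere_slicing_count (n k : ℕ) (hn : 1 ≤ n) (hk : 1 ≤ k)
    (a : Fin k → EuclideanSpace ℝ (Fin n)) (ha : ∀ j, a j ≠ 0)
    (hindep : ∀ s : Finset (Fin k), s.card ≤ n →
      LinearIndependent ℝ (fun i : s => a i)) :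
    Nat.card (ConnectedComponents
      {x : EuclideanSpace ℝ (Fin n) | ‖x‖ = 1 ∧ ∀ j, inner ℝ (a j) x ≠ (0 : ℝ)}) =
      2 * ∑ i ∈ Finset.range n, (k - 1).choose i :=
  sphere_slicing_count_general n k hk a hindep
end

section
/- For 2n ≤ m, the probability of at most n-1 heads in m-1 fair coin flips satisfies 2^{-(m-1)} · ∑_{k=0}^{n-1} C(m-1, k) ≤ exp(-(m-2n+1)²/(2(m-1))). -/
open Real Finset

lemma chernoff_step (N : ℕ) (n : ℕ) (t : ℝ) (ht : 0 ≤ t) (hnN : n ≤ N + 1) :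
    (∑ k ∈ Finset.range n, (N.choose k : ℝ)) ≤
      Real.exp (t * (n - 1)) * (1 + Real.exp (-t)) ^ N := by
  have h1 : (∑ k ∈ Finset.range n, (N.choose k : ℝ)) ≤
      ∑ k ∈ Finset.range n, (N.choose k : ℝ) * Real.exp (t * ((n : ℝ) - 1 - k)) := by
    apply Finset.sum_le_sum
    intro k hk
    have hk' : (k : ℝ) ≤ (n : ℝ) - 1 := by
      have := Finset.mem_range.mp hk
      have : (k : ℝ) + 1 ≤ n := by exact_mod_cast this
      linarith
    have : (1 : ℝ) ≤ Real.exp (t * ((n : ℝ) - 1 - k)) := by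
      have h0 : 0 ≤ (n : ℝ) - 1 - k := by linarith
      exact Real.one_le_exp_iff.mpr (mul_nonneg ht h0)
    exact le_mul_of_one_le_right (by positivity) this
  have h2 : ∑ k ∈ Finset.range n, (N.choose k : ℝ) * Real.exp (t * ((n : ℝ) - 1 - k)) ≤
      ∑ k ∈ Finset.range (N + 1), (N.choose k : ℝ) * Real.exp (t * ((n : ℝ) - 1 - k)) := by
    apply Finset.sum_le_sum_of_subset_of_nonneg
    · exact Finset.range_subset_range.mpr hnN
    · intro k _ _; positivity
  have h3 : ∑ k ∈ Finset.range (N + 1), (N.choose k : ℝ) * Real.exp (t * ((n : ℝ) - 1 - k)) =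
      Real.exp (t * (n - 1)) * (1 + Real.exp (-t)) ^ N := by
    have hp := add_pow (Real.exp (-t)) 1 N
    rw [add_comm (Real.exp (-t)) 1] at hp
    rw [hp, Finset.mul_sum]
    apply Finset.sum_congr rfl
    intro k hk
    rw [one_pow, mul_one]
    rw [show t * ((n : ℝ) - 1 - k) = t * ((n:ℝ)-1) + (-t) * k by ring, Real.exp_add,
      ← Real.exp_nat_mul, mul_comm ((k:ℝ)) (-t)]
    push_cast
    ring
  linarith

/-- Hoeffding tail bound for `Bin(m-1, 1/2)`: the probability of at most `n-1` heads
in `m-1` fair coin flips is at most `exp(-(m-2n+1)²/(2(m-1)))`, for `2n ≤ m`. -/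
theorem coin_flip_tail_bound (m n : ℕ) (hn : 1 ≤ n) (hm : 2 * n ≤ m) :
    (∑ k ∈ Finset.range n, ((m - 1).choose k : ℝ)) / 2 ^ (m - 1) ≤
      Real.exp (-((m : ℝ) - 2 * n + 1) ^ 2 / (2 * ((m : ℝ) - 1))) := by
  have hm2 : 2 ≤ m := le_trans (by omega) hm
  set Nn := m - 1 with hNn
  have hNcast : (Nn : ℝ) = (m : ℝ) - 1 := by
    rw [hNn]; push_cast [Nat.cast_sub (by omega : 1 ≤ m)]; ring
  set N : ℝ := (m : ℝ) - 1 with hNdef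
  set K : ℝ := (n : ℝ) - 1 with hKdef
  have hNpos : 0 < N := by
    have : (2 : ℝ) ≤ m := by exact_mod_cast hm2
    simp only [hNdef]; linarith
  have hNK : 0 < N - 2 * K := by
    have : (2 * n : ℝ) ≤ m := by exact_mod_cast hm
    simp only [hNdef, hKdef]; push_cast; linarith
  set t : ℝ := 2 * (N - 2 * K) / N with htdef
  have ht : 0 ≤ t := by positivity
  have hnN : n ≤ Nn + 1 := by omega
  have hmain := chernoff_step Nn n t ht hnN
  rw [div_le_iff₀ (by positivity)]
  calc (∑ k ∈ Finset.range n, ((Nn).choose k : ℝ))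
      ≤ Real.exp (t * K) * (1 + Real.exp (-t)) ^ Nn := by
        simpa [hKdef] using hmain
    _ ≤ Real.exp (t * K) * (2 * Real.exp (t ^ 2 / 8 - t / 2)) ^ Nn := by
        apply mul_le_mul_of_nonneg_left _ (Real.exp_nonneg _)
        apply pow_le_pow_left₀ (by positivity)
        have hc : Real.cosh (t / 2) ≤ Real.exp ((t / 2) ^ 2 / 2) :=
          Real.cosh_le_exp_half_sq (t / 2)
        have h1 : 1 + Real.exp (-t) = 2 * Real.exp (-t / 2) * Real.cosh (t / 2) := by
          rw [Real.cosh_eq, show -(t/2) = -t/2 by ring]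
          have e1 : Real.exp (-t/2) * Real.exp (t/2) = 1 := by
            rw [← Real.exp_add, show -t/2 + t/2 = 0 by ring, Real.exp_zero]
          have e2 : Real.exp (-t/2) * Real.exp (-t/2) = Real.exp (-t) := by
            rw [← Real.exp_add]; ring_nf
          nlinarith [e1, e2]
        rw [h1]
        have h2 : Real.exp (-t / 2) * Real.exp ((t / 2) ^ 2 / 2) =
            Real.exp (t ^ 2 / 8 - t / 2) := by
          rw [← Real.exp_add]; ring_nf
        calc 2 * Real.exp (-t/2) * Real.cosh (t/2)
            ≤ 2 * Real.exp (-t/2) * Real.exp ((t/2)^2/2) := by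
              apply mul_le_mul_of_nonneg_left hc (by positivity)
          _ = 2 * Real.exp (t^2/8 - t/2) := by rw [mul_assoc, h2]
    _ = 2 ^ Nn * (Real.exp (t * K) * Real.exp (t ^ 2 / 8 - t / 2) ^ Nn) := by
        rw [mul_pow]; ring
    _ = 2 ^ Nn * Real.exp (t * K + (Nn : ℝ) * (t ^ 2 / 8 - t / 2)) := by
        rw [← Real.exp_nat_mul, ← Real.exp_add]
    _ ≤ Real.exp (-((m : ℝ) - 2 * n + 1) ^ 2 / (2 * ((m : ℝ) - 1))) * 2 ^ Nn := by
        rw [mul_comm]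
        apply mul_le_mul_of_nonneg_right _ (by positivity)
        apply Real.exp_le_exp.mpr
        rw [hNcast]
        have hexp : t * K + N * (t ^ 2 / 8 - t / 2) = -(N - 2 * K) ^ 2 / (2 * N) := by
          rw [htdef]
          field_simp
          ring
        rw [hexp]
        have heq : -(N - 2 * K) ^ 2 / (2 * N) =
            -((m : ℝ) - 2 * n + 1) ^ 2 / (2 * ((m : ℝ) - 1)) := by
          simp only [hNdef, hKdef]; ring_nf
        rw [heq]
end

section
/- Suppose x⁰ ∈ ℂ^n satisfies |⟨a_i, x⁰⟩| = b_i for i = 1,…,m and ⟨x⁰, x̂⟩ is real and nonnegative. If for every unit vector δ ∈ ℂ^n with ⟨δ, x̂⟩ real and nonnegative there exists an index i such that Re(conj(⟨a_i, x⁰⟩)·⟨a_i, δ⟩) > 0, then x⁰ is the unique maximizer of Re⟨x, x̂⟩ over the set {x ∈ ℂ^n : |⟨a_i, x⟩| ≤ b_i for all i}. -/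
/-!
Rotate a feasible `x` by the phase `c = exp(i arg⟨x, x̂⟩)`, so that `y = c • x` is still feasible
and `⟨y, x̂⟩ = |⟨x, x̂⟩| ≥ ⟨x⁰, x̂⟩`. Then `δ = y - x⁰` is an aligned ascent direction, and
feasibility of `y = x⁰ + δ` forces `Re(conj⟨aᵢ, x⁰⟩ ⟨aᵢ, δ⟩) ≤ 0` for every `i`, which the
hypothesis rules out unless `δ = 0`. Finally `y = x⁰` gives `|⟨x, x̂⟩| ≤ Re⟨x, x̂⟩`, so the phase
was trivial and `x = x⁰`.
-/

open Complex ComplexConjugate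
open scoped ComplexOrder

theorem re_inner_nonpos_of_norm_add_le {𝕜 E : Type*} [RCLike 𝕜] [SeminormedAddCommGroup E]
    [InnerProductSpace 𝕜 E] {u v : E} (h : ‖u + v‖ ≤ ‖u‖) : RCLike.re (inner 𝕜 u v) ≤ 0 := by
  have hsq := norm_add_sq (𝕜 := 𝕜) u v
  nlinarith [sq_nonneg ‖v‖, pow_le_pow_left₀ (norm_nonneg _) h 2]

theorem Complex.re_conj_mul_nonpos_of_norm_add_le {u v : ℂ} (h : ‖u + v‖ ≤ ‖u‖) :
    (conj u * v).re ≤ 0 := by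
  simpa only [RCLike.inner_apply', RCLike.re_to_complex] using
    re_inner_nonpos_of_norm_add_le (𝕜 := ℂ) h

theorem Complex.conj_exp_arg_mul_I_mul_self (z : ℂ) : conj (exp (arg z * I)) * z = ‖z‖ := by
  nth_rw 2 [← norm_mul_exp_arg_mul_I z]
  rw [mul_left_comm, conj_mul', norm_exp_ofReal_mul_I]
  simp

theorem eq_of_norm_inner_le_of_nonneg_inner_sub {E ι : Type*} [NormedAddCommGroup E]
    [InnerProductSpace ℂ E] {a : ι → E} {x0 xhat y : E}
    (hcond : ∀ δ : E, ‖δ‖ = 1 → (inner ℂ δ xhat).im = 0 → 0 ≤ (inner ℂ δ xhat).re →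
      ∃ i, 0 < (conj (inner ℂ (a i) x0) * inner ℂ (a i) δ).re)
    (hy : ∀ i, ‖inner ℂ (a i) y‖ ≤ ‖inner ℂ (a i) x0‖) (hyx : 0 ≤ inner ℂ (y - x0) xhat) :
    y = x0 := by
  by_contra hne
  set δ := y - x0
  have hδ : δ ≠ 0 := sub_ne_zero.mpr hne
  have hdescent : ∀ i, (conj (inner ℂ (a i) x0) * inner ℂ (a i) δ).re ≤ 0 := fun i =>
    re_conj_mul_nonpos_of_norm_add_le <| by rw [← inner_add_right, add_sub_cancel]; exact hy i
  have hunit_nonneg : 0 ≤ inner ℂ (((‖δ‖⁻¹ : ℝ) : ℂ) • δ) xhat := by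
    rw [inner_smul_left, conj_ofReal]
    exact mul_nonneg (zero_le_real.mpr (by positivity)) hyx
  have hunit : ‖((‖δ‖⁻¹ : ℝ) : ℂ) • δ‖ = 1 := by rw [ofReal_inv]; exact norm_smul_inv_norm hδ
  obtain ⟨i, hi⟩ := hcond _ hunit (nonneg_iff.mp hunit_nonneg).2.symm
    (nonneg_iff.mp hunit_nonneg).1
  rw [inner_smul_right, mul_left_comm, re_ofReal_mul] at hi
  exact (hdescent i).not_gt (pos_of_mul_pos_right hi (by positivity))

theorem phasemax_uniqueness_complex_general {n m : ℕ}
    (a : Fin m → EuclideanSpace ℂ (Fin n)) (b : Fin m → ℝ)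
    (x0 xhat : EuclideanSpace ℂ (Fin n))
    (hmeas : ∀ i, ‖(inner ℂ (a i) x0 : ℂ)‖ = b i)
    (halign_im : (inner ℂ x0 xhat : ℂ).im = 0)
    (hcond : ∀ δ : EuclideanSpace ℂ (Fin n), ‖δ‖ = 1 →
      (inner ℂ δ xhat : ℂ).im = 0 → 0 ≤ (inner ℂ δ xhat : ℂ).re →
      ∃ i, 0 < ((starRingEnd ℂ) (inner ℂ (a i) x0 : ℂ) * (inner ℂ (a i) δ : ℂ)).re) :
    ∀ x : EuclideanSpace ℂ (Fin n),
      (∀ i, ‖(inner ℂ (a i) x : ℂ)‖ ≤ b i) →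
      (inner ℂ x0 xhat : ℂ).re ≤ (inner ℂ x xhat : ℂ).re → x = x0 := by
  intro x hfeas hmax
  set z := inner ℂ x xhat
  set c := exp (arg z * I)
  have hrot : inner ℂ (c • x) xhat = ‖z‖ := by rw [inner_smul_left, conj_exp_arg_mul_I_mul_self]
  have hcx : c • x = x0 := by
    refine eq_of_norm_inner_le_of_nonneg_inner_sub hcond (fun i => ?_) ?_
    · rw [inner_smul_right, norm_mul, norm_exp_ofReal_mul_I, one_mul, hmeas]
      exact hfeas i
    · rw [inner_sub_left, hrot, sub_nonneg, le_def]
      exact ⟨hmax.trans (re_le_norm z), by simp [halign_im]⟩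
  have hz : 0 ≤ z := by
    refine re_eq_norm.mp (le_antisymm (re_le_norm z) ?_)
    rwa [← hcx, hrot, ofReal_re] at hmax
  have hc : c = 1 := by simp [c, arg_eq_zero_iff_zero_le.mpr hz]
  rwa [hc, one_smul] at hcx

/-- PhaseMax uniqueness condition (complex case, Theorem 2). If every aligned unit
ascent direction `δ` admits a measurement `i` with
`Re(conj⟨a_i,x⁰⟩·⟨a_i,δ⟩) > 0`, then `x⁰` uniquely maximizes `Re⟨x, x̂⟩` over the
feasible set `{x : |⟨a_i,x⟩| ≤ b_i}`. -/
theorem phasemax_uniqueness_complex {n m : ℕ}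
    (a : Fin m → EuclideanSpace ℂ (Fin n)) (b : Fin m → ℝ)
    (x0 xhat : EuclideanSpace ℂ (Fin n))
    (hb : ∀ i, 0 ≤ b i)
    (hmeas : ∀ i, ‖(inner ℂ (a i) x0 : ℂ)‖ = b i)
    (halign_im : (inner ℂ x0 xhat : ℂ).im = 0)
    (halign_re : 0 ≤ (inner ℂ x0 xhat : ℂ).re)
    (hcond : ∀ δ : EuclideanSpace ℂ (Fin n), ‖δ‖ = 1 →
      (inner ℂ δ xhat : ℂ).im = 0 → 0 ≤ (inner ℂ δ xhat : ℂ).re →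
      ∃ i, 0 < ((starRingEnd ℂ) (inner ℂ (a i) x0 : ℂ) * (inner ℂ (a i) δ : ℂ)).re) :
    ∀ x : EuclideanSpace ℂ (Fin n),
      (∀ i, ‖(inner ℂ (a i) x : ℂ)‖ ≤ b i) →
      (inner ℂ x0 xhat : ℂ).re ≤ (inner ℂ x xhat : ℂ).re → x = x0 :=
  phasemax_uniqueness_complex_general a b x0 xhat hmeas halign_im hcond
end

section
/- Suppose x⁰ ∈ ℝ^n satisfies |⟨a_i, x⁰⟩| = b_i for i = 1,…,m and ⟨x⁰, x̂⟩ ≥ 0. If for every unit vector δ ∈ ℝ^n with ⟨δ, x̂⟩ ≥ 0 there exists an index i with ⟨a_i, x⁰⟩·⟨a_i, δ⟩ > 0, then x⁰ is the unique maximizer of ⟨x, x̂⟩ over {x ∈ ℝ^n : |⟨a_i, x⟩| ≤ b_i for all i}. -/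
/-!
If a feasible `x` with `⟪x, x̂⟫ ≥ ⟪x⁰, x̂⟫` differed from `x⁰`, the direction `δ = x - x⁰`
(normalized) would be admissible in the hypothesis, giving an `i` with `⟪aᵢ, x⁰⟫ ⟪aᵢ, δ⟫ > 0`.
Then `|⟪aᵢ, x⟫| = |⟪aᵢ, x⁰⟫ + ⟪aᵢ, δ⟫| > |⟪aᵢ, x⁰⟫| = bᵢ`, so `x` would violate the `i`-th constraint.
-/

open RealInnerProductSpace

lemma mul_nonpos_of_abs_add_le_abs {s t : ℝ} (h : |s + t| ≤ |s|) : s * t ≤ 0 := by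
  have hsq : (s + t) ^ 2 ≤ s ^ 2 := sq_le_sq.mpr h
  nlinarith [sq_nonneg t]

section

variable {E ι : Type*} [NormedAddCommGroup E] [InnerProductSpace ℝ E]

lemma exists_pos_mul_inner_of_ne_zero {a : ι → E} {x0 xhat : E}
    (hcond : ∀ δ : E, ‖δ‖ = 1 → 0 ≤ ⟪δ, xhat⟫ → ∃ i, 0 < ⟪a i, x0⟫ * ⟪a i, δ⟫)
    {δ : E} (hδ : δ ≠ 0) (hδxhat : 0 ≤ ⟪δ, xhat⟫) : ∃ i, 0 < ⟪a i, x0⟫ * ⟪a i, δ⟫ := by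
  have hnorm : 0 < ‖δ‖ := norm_pos_iff.mpr hδ
  obtain ⟨i, hi⟩ := hcond (‖δ‖⁻¹ • δ) (norm_smul_inv_norm hδ)
    (by rw [real_inner_smul_left]; positivity)
  refine ⟨i, ?_⟩
  rw [real_inner_smul_right, mul_left_comm] at hi
  exact pos_of_mul_pos_right hi (inv_pos.mpr hnorm).le

theorem eq_of_abs_inner_le_of_inner_le {a : ι → E} {b : ι → ℝ} {x0 xhat : E}
    (hmeas : ∀ i, |⟪a i, x0⟫| = b i)
    (hcond : ∀ δ : E, ‖δ‖ = 1 → 0 ≤ ⟪δ, xhat⟫ → ∃ i, 0 < ⟪a i, x0⟫ * ⟪a i, δ⟫)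
    {x : E} (hx : ∀ i, |⟪a i, x⟫| ≤ b i) (hmax : ⟪x0, xhat⟫ ≤ ⟪x, xhat⟫) : x = x0 := by
  by_contra hne
  obtain ⟨i, hi⟩ := exists_pos_mul_inner_of_ne_zero hcond (sub_ne_zero.mpr hne)
    (by rw [inner_sub_left]; linarith)
  have hfeas : |⟪a i, x0⟫ + ⟪a i, x - x0⟫| ≤ |⟪a i, x0⟫| := by
    rw [← inner_add_right, add_sub_cancel, hmeas]
    exact hx i
  exact hi.not_ge (mul_nonpos_of_abs_add_le_abs hfeas)

end

theorem phasemax_uniqueness_real_general {n m : ℕ}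
    (a : Fin m → EuclideanSpace ℝ (Fin n)) (b : Fin m → ℝ)
    (x0 xhat : EuclideanSpace ℝ (Fin n))
    (hmeas : ∀ i, |(inner ℝ (a i) x0 : ℝ)| = b i)
    (hcond : ∀ δ : EuclideanSpace ℝ (Fin n), ‖δ‖ = 1 →
      0 ≤ (inner ℝ δ xhat : ℝ) →
      ∃ i, 0 < (inner ℝ (a i) x0 : ℝ) * (inner ℝ (a i) δ : ℝ)) :
    ∀ x : EuclideanSpace ℝ (Fin n),
      (∀ i, |(inner ℝ (a i) x : ℝ)| ≤ b i) →
      (inner ℝ x0 xhat : ℝ) ≤ (inner ℝ x xhat : ℝ) → x = x0 :=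
  fun _ hx hmax => eq_of_abs_inner_le_of_inner_le hmeas hcond hx hmax

/-- PhaseMax uniqueness condition (real case). -/
theorem phasemax_uniqueness_real {n m : ℕ}
    (a : Fin m → EuclideanSpace ℝ (Fin n)) (b : Fin m → ℝ)
    (x0 xhat : EuclideanSpace ℝ (Fin n))
    (hb : ∀ i, 0 ≤ b i)
    (hmeas : ∀ i, |(inner ℝ (a i) x0 : ℝ)| = b i)
    (halign : 0 ≤ (inner ℝ x0 xhat : ℝ))
    (hcond : ∀ δ : EuclideanSpace ℝ (Fin n), ‖δ‖ = 1 →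
      0 ≤ (inner ℝ δ xhat : ℝ) →
      ∃ i, 0 < (inner ℝ (a i) x0 : ℝ) * (inner ℝ (a i) δ : ℝ)) :
    ∀ x : EuclideanSpace ℝ (Fin n),
      (∀ i, |(inner ℝ (a i) x : ℝ)| ≤ b i) →
      (inner ℝ x0 xhat : ℝ) ≤ (inner ℝ x xhat : ℝ) → x = x0 :=
  phasemax_uniqueness_real_general a b x0 xhat hmeas hcond
end

section
/- For every integer n ≥ 4 and 0 ≤ t ≤ 1: (Γ(n/2)/(Γ((n-1)/2)·√π)) · ∫₀^{arccos t} sin^{n-2}(φ) dφ ≥ (1/√(8n)) · (1 - t²)^{(n-1)/2}. -/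
open Real intervalIntegral

lemma gamma_ratio_aux (a : ℝ) (ha : 0 < a) :
    Real.sqrt a * Real.Gamma (a + 1/2) ≤ Real.Gamma (a + 1) := by
  have hga : 0 < Real.Gamma a := Real.Gamma_pos_of_pos ha
  have hga1 : 0 < Real.Gamma (a + 1) := Real.Gamma_pos_of_pos (by linarith)
  have hgh : 0 < Real.Gamma (a + 1/2) := Real.Gamma_pos_of_pos (by linarith)
  have hc := Real.convexOn_log_Gamma.2 (Set.mem_Ioi.mpr ha)
    (Set.mem_Ioi.mpr (show (0:ℝ) < a + 1 by linarith))
    (by norm_num : (0:ℝ) ≤ 1/2) (by norm_num : (0:ℝ) ≤ 1/2) (by norm_num)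
  have hmid : (1/2 : ℝ) • a + (1/2 : ℝ) • (a + 1) = a + 1/2 := by
    simp [smul_eq_mul]; ring
  rw [hmid] at hc
  simp only [Function.comp, smul_eq_mul] at hc
  -- hc : log Γ(a+1/2) ≤ 1/2 * log Γ a + 1/2 * log Γ (a+1)
  have hsq : Real.Gamma (a + 1/2) ^ 2 ≤ Real.Gamma a * Real.Gamma (a + 1) := by
    have h2 : Real.log (Real.Gamma (a + 1/2) ^ 2) ≤ Real.log (Real.Gamma a * Real.Gamma (a + 1)) := by
      rw [Real.log_pow, Real.log_mul hga.ne' hga1.ne']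
      push_cast
      linarith
    exact (Real.log_le_log_iff (by positivity) (by positivity)).mp h2
  have hG : Real.Gamma a = Real.Gamma (a + 1) / a := by
    rw [Real.Gamma_add_one ha.ne']
    field_simp
  rw [hG] at hsq
  have h3 : a * Real.Gamma (a + 1/2) ^ 2 ≤ Real.Gamma (a + 1) ^ 2 := by
    rw [div_mul_eq_mul_div, le_div_iff₀ ha] at hsq
    nlinarith
  have h4 := Real.sqrt_le_sqrt h3
  rw [Real.sqrt_mul ha.le, Real.sqrt_sq hgh.le, Real.sqrt_sq hga1.le] at h4
  exact h4

/-- Lower bound on the cap-measure function `λ(t)` (Appendix B): for `n ≥ 4` and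
`0 ≤ t ≤ 1`,
`(Γ(n/2)/(Γ((n-1)/2)√π)) ∫₀^{arccos t} sin^{n-2} φ dφ ≥ (1-t²)^{(n-1)/2}/√(8n)`. -/
theorem cap_measure_lower_bound (n : ℕ) (hn : 4 ≤ n) (t : ℝ) (ht0 : 0 ≤ t) (ht1 : t ≤ 1) :
    (1 / Real.sqrt (8 * n)) * (1 - t ^ 2) ^ (((n : ℝ) - 1) / 2) ≤
      Real.Gamma ((n : ℝ) / 2) / (Real.Gamma (((n : ℝ) - 1) / 2) * Real.sqrt Real.pi) *
        ∫ φ in (0 : ℝ)..Real.arccos t, Real.sin φ ^ (n - 2) := by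
  have hn4 : (4:ℝ) ≤ (n:ℝ) := by exact_mod_cast hn
  set A := Real.arccos t with hA
  have hA0 : 0 ≤ A := Real.arccos_nonneg t
  have hAπ : A ≤ Real.pi := Real.arccos_le_pi t
  set m := n - 2 with hm
  have hmn : (m:ℝ) + 1 = (n:ℝ) - 1 := by
    have h2 : (2:ℕ) ≤ n := by omega
    rw [hm]
    push_cast [Nat.cast_sub h2]
    ring
  have ht2 : 0 ≤ 1 - t ^ 2 := by nlinarith
  -- step 1: lower bound for the integral
  have hint : (1 - t ^ 2) ^ (((n : ℝ) - 1) / 2) / ((n:ℝ) - 1) ≤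
      ∫ φ in (0:ℝ)..A, Real.sin φ ^ m := by
    have hI1 : (∫ φ in (0:ℝ)..A, Real.sin φ ^ m * Real.cos φ) =
        Real.sin A ^ (m + 1) / ((m:ℝ) + 1) := by
      have := integral_sin_pow_mul_cos_pow_odd (a := 0) (b := A) m 0
      simpa [Real.sin_zero, integral_pow] using this
    have hmono : (∫ φ in (0:ℝ)..A, Real.sin φ ^ m * Real.cos φ) ≤
        ∫ φ in (0:ℝ)..A, Real.sin φ ^ m := by
      apply intervalIntegral.integral_mono_on hA0
      · exact (Continuous.intervalIntegrable (by fun_prop) _ _)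
      · exact (Continuous.intervalIntegrable (by fun_prop) _ _)
      · intro x hx
        have hs : 0 ≤ Real.sin x := Real.sin_nonneg_of_nonneg_of_le_pi hx.1 (hx.2.trans hAπ)
        exact mul_le_of_le_one_right (pow_nonneg hs m) (Real.cos_le_one x)
    have hsinA : Real.sin A ^ (m + 1) = (1 - t ^ 2) ^ (((n : ℝ) - 1) / 2) := by
      rw [hA, Real.sin_arccos, Real.sqrt_eq_rpow,
        ← Real.rpow_natCast ((1 - t ^ 2) ^ ((1:ℝ)/2)) (m+1), ← Real.rpow_mul ht2]
      congr 1
      push_cast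
      linarith
    rw [hsinA, hmn] at hI1
    linarith [hI1 ▸ hmono]
  -- Gamma ratio bound
  have ha : (0:ℝ) < (n:ℝ)/2 - 1 := by linarith
  have hratio := gamma_ratio_aux ((n:ℝ)/2 - 1) ha
  have he1 : (n:ℝ)/2 - 1 + 1 = (n:ℝ)/2 := by ring
  have he2 : (n:ℝ)/2 - 1 + 1/2 = ((n:ℝ) - 1)/2 := by ring
  rw [he1, he2] at hratio
  have hgh : 0 < Real.Gamma (((n:ℝ) - 1)/2) := Real.Gamma_pos_of_pos (by linarith)
  have hgn : 0 < Real.Gamma ((n:ℝ)/2) := Real.Gamma_pos_of_pos (by linarith)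
  have hπ : 0 < Real.sqrt Real.pi := Real.sqrt_pos.mpr Real.pi_pos
  have h8 : (0:ℝ) < Real.sqrt (8 * n) := Real.sqrt_pos.mpr (by positivity)
  -- constant bound
  have hnum : Real.sqrt Real.pi * ((n:ℝ) - 1) ≤ Real.sqrt (8 * n) * Real.sqrt ((n:ℝ)/2 - 1) := by
    rw [← Real.sqrt_mul (by positivity)]
    have h1 : Real.sqrt Real.pi * ((n:ℝ) - 1) = Real.sqrt (Real.pi * ((n:ℝ)-1)^2) := by
      rw [Real.sqrt_mul Real.pi_pos.le, Real.sqrt_sq (by linarith)]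
    rw [h1]
    apply Real.sqrt_le_sqrt
    nlinarith [Real.pi_lt_d2]
  have hconst : (1 / Real.sqrt (8 * n)) ≤
      Real.Gamma ((n : ℝ) / 2) / (Real.Gamma (((n : ℝ) - 1) / 2) * Real.sqrt Real.pi) / ((n:ℝ) - 1) := by
    rw [div_div, div_le_div_iff₀ h8 (mul_pos (mul_pos hgh hπ) (by linarith)), one_mul]
    calc Real.Gamma (((n:ℝ) - 1)/2) * Real.sqrt Real.pi * ((n:ℝ) - 1)
        = (Real.sqrt Real.pi * ((n:ℝ) - 1)) * Real.Gamma (((n:ℝ) - 1)/2) := by ring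
      _ ≤ (Real.sqrt (8 * n) * Real.sqrt ((n:ℝ)/2 - 1)) * Real.Gamma (((n:ℝ) - 1)/2) :=
          mul_le_mul_of_nonneg_right hnum hgh.le
      _ = (Real.sqrt ((n:ℝ)/2 - 1) * Real.Gamma (((n:ℝ) - 1)/2)) * Real.sqrt (8 * n) := by ring
      _ ≤ Real.Gamma ((n:ℝ)/2) * Real.sqrt (8 * n) :=
          mul_le_mul_of_nonneg_right hratio h8.le
  -- combine
  have hS : 0 ≤ (1 - t ^ 2) ^ (((n : ℝ) - 1) / 2) := Real.rpow_nonneg ht2 _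
  have hc0 : 0 ≤ Real.Gamma ((n : ℝ) / 2) / (Real.Gamma (((n : ℝ) - 1) / 2) * Real.sqrt Real.pi) :=
    div_nonneg hgn.le (by positivity)
  calc (1 / Real.sqrt (8 * n)) * (1 - t ^ 2) ^ (((n : ℝ) - 1) / 2)
      ≤ (Real.Gamma ((n : ℝ) / 2) / (Real.Gamma (((n : ℝ) - 1) / 2) * Real.sqrt Real.pi) / ((n:ℝ) - 1))
        * (1 - t ^ 2) ^ (((n : ℝ) - 1) / 2) := mul_le_mul_of_nonneg_right hconst hS
    _ = Real.Gamma ((n : ℝ) / 2) / (Real.Gamma (((n : ℝ) - 1) / 2) * Real.sqrt Real.pi)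
        * ((1 - t ^ 2) ^ (((n : ℝ) - 1) / 2) / ((n:ℝ) - 1)) := by ring
    _ ≤ Real.Gamma ((n : ℝ) / 2) / (Real.Gamma (((n : ℝ) - 1) / 2) * Real.sqrt Real.pi)
        * ∫ φ in (0:ℝ)..A, Real.sin φ ^ m := mul_le_mul_of_nonneg_left hint hc0
end
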